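/- Metastability cannot be detected: there exists no circuit that implements the function f : BM → Pow(BM) with f(M) = {1} and f(x) = {0} for x ∈ {0, 1}. -/

import Mathlib

set_option linter.unusedVariables false

attribute [local instance] Classical.propDecidable

/-- Signal values: stable `zero`, `one`, and metastable `meta`. -/
inductive BM : Type
  | zero
  | one
  | meta'
  deriving DecidableEq

/-- Embedding of stable Boolean values into `BM`. -/
def BM.ofBool : Bool → BM
  | false => BM.zero
  | true => BM.one

/-- `inResM x y` means `y ∈ ResM(x)`, the set of partial resolutions of `x`. -/
def inResM {k : ℕ} (x y : Fin k → BM) : Prop :=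
  ∀ i, x i = y i ∨ x i = BM.meta'

/-- `inRes x y` means `y ∈ Res(x)`, i.e. `y` is a complete (stable) resolution of `x`. -/
def inRes {k : ℕ} (x y : Fin k → BM) : Prop :=
  inResM x y ∧ ∀ i, y i ≠ BM.meta'

/-- The complete resolutions of `x`, viewed as Boolean words. -/
def boolRes {k : ℕ} (x : Fin k → BM) : Set (Fin k → Bool) :=
  { z | ∀ i, x i = BM.ofBool (z i) ∨ x i = BM.meta' }

/-- The metastable (Kleene) extension `f_M : BM^k → BM` of a Boolean function
`f : B^k → B`: it outputs a stable value `b` iff all complete resolutions of the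
input evaluate to `b` under `f`, and `meta` otherwise. -/
noncomputable def kleene {k : ℕ} (f : (Fin k → Bool) → Bool) (x : Fin k → BM) : BM :=
  if ∀ z ∈ boolRes x, f z = false then BM.zero
  else if ∀ z ∈ boolRes x, f z = true then BM.one
  else BM.meta'

/-- Combinational logic with `m` input nodes: formulas built from inputs,
`BM`-constants (gates of indegree 0), and gates computing the metastable extension
of a Boolean function of their in-neighbors.  (A DAG evaluates exactly like the
formula obtained by unsharing, so this faithfully captures evaluation of
combinational logic DAGs.) -/
inductive Comb (m : ℕ) : Type
  | input : Fin m → Comb m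
  | const : BM → Comb m
  | gate : (j : ℕ) → ((Fin j → Bool) → Bool) → (Fin j → Comb m) → Comb m

/-- Recursive evaluation of combinational logic on input `x ∈ BM^m`. -/
noncomputable def Comb.eval {m : ℕ} (x : Fin m → BM) : Comb m → BM
  | .input i => x i
  | .const b => b
  | .gate _ f cs => kleene f (fun t => (cs t).eval x)

/-- Register types: simple, mask-0, mask-1. -/
inductive RegType : Type
  | simple
  | mask0
  | mask1
  deriving DecidableEq

/-- `regRead t b (o, b')` holds iff a register of type `t` in state `b` can be read
with read value `o`, moving to state `b'`:  a register in a stable state yields that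
state and keeps it; a simple register in state `meta` yields `meta` and stays `meta`;
a mask-`c` register in state `meta` either yields `c` staying in state `meta`, or
yields `meta` changing its state to `1 - c`. -/
def regRead : RegType → BM → BM × BM → Prop
  | _, BM.zero, p => p = (BM.zero, BM.zero)
  | _, BM.one, p => p = (BM.one, BM.one)
  | RegType.simple, BM.meta', p => p = (BM.meta', BM.meta')
  | RegType.mask0, BM.meta', p => p = (BM.zero, BM.meta') ∨ p = (BM.meta', BM.one)
  | RegType.mask1, BM.meta', p => p = (BM.one, BM.meta') ∨ p = (BM.meta', BM.zero)

/-- A circuit with `m` input, `k` local and `n` output registers: a type for each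
register, combinational logic with `m + k` input nodes (one per non-output register)
and `k + n` output nodes (one per non-input register), and an initialization of the
non-input registers. -/
structure Circuit (m k n : ℕ) : Type where
  inType : Fin m → RegType
  locType : Fin k → RegType
  outType : Fin n → RegType
  logic : Fin (k + n) → Comb (m + k)
  init : Fin (k + n) → BM

/-- A state of a circuit: values of input, local, and output registers. -/
structure CState (m k n : ℕ) : Type where
  inp : Fin m → BM
  loc : Fin k → BM
  out : Fin n → BM

/-- A state as a word in `BM^{m+k+n}`. -/
def CState.toVec {m k n : ℕ} (s : CState m k n) : Fin (m + (k + n)) → BM :=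
  Fin.append s.inp (Fin.append s.loc s.out)

/-- Read phase: `o ∈ BM^{m+k}` are possible read values of the non-output registers
in state `s`, and `ι'` the corresponding successor states of the input registers. -/
def ReadRel {m k n : ℕ} (C : Circuit m k n) (s : CState m k n)
    (o : Fin (m + k) → BM) (ι' : Fin m → BM) : Prop :=
  (∀ i : Fin m, regRead (C.inType i) (s.inp i) (o (Fin.castAdd k i), ι' i)) ∧
  (∀ j : Fin k, ∃ st', regRead (C.locType j) (s.loc j) (o (Fin.natAdd m j), st'))

/-- Evaluation phase: `f^G` applied to the read values. -/
noncomputable def evalLogic {m k n : ℕ} (C : Circuit m k n) (o : Fin (m + k) → BM) :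
    Fin (k + n) → BM :=
  fun j => (C.logic j).eval o

/-- `Write^C(s)`: possible values written to the non-input registers. -/
def WriteSet {m k n : ℕ} (C : Circuit m k n) (s : CState m k n) :
    Set (Fin (k + n) → BM) :=
  { w | ∃ o ι', ReadRel C s o ι' ∧ inResM (evalLogic C o) w }

/-- Successor-state relation: read all non-output registers, evaluate the logic,
and write an arbitrary partial resolution of the result to the non-input registers. -/
def Succ {m k n : ℕ} (C : Circuit m k n) (s s' : CState m k n) : Prop :=
  ∃ o ι', ReadRel C s o ι' ∧ s'.inp = ι' ∧
    inResM (evalLogic C o) (Fin.append s'.loc s'.out)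

/-- `reach C r s₀ = S^C_r(s₀)`: states reachable in `r` rounds from `s₀`. -/
def reach {m k n : ℕ} (C : Circuit m k n) : ℕ → CState m k n → Set (CState m k n)
  | 0, s => {s}
  | r + 1, s => { t | ∃ u ∈ reach C r s, Succ C u t }

/-- The initial state of `C` with input `ι`. -/
def initState {m k n : ℕ} (C : Circuit m k n) (ι : Fin m → BM) : CState m k n :=
  ⟨ι, fun j => C.init (Fin.castAdd n j), fun j => C.init (Fin.natAdd k j)⟩

/-- `C_r(ι)`: possible outputs after `r` rounds on input `ι`. -/
def Cout {m k n : ℕ} (C : Circuit m k n) (r : ℕ) (ι : Fin m → BM) :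
    Set (Fin n → BM) :=
  { y | ∃ s ∈ reach C r (initState C ι), y = s.out }

/-- `r` rounds of `C` implement `f` iff `C_r(ι) ⊆ f(ι)` for all inputs `ι`. -/
def Implements {m k n : ℕ} (C : Circuit m k n) (r : ℕ)
    (f : (Fin m → BM) → Set (Fin n → BM)) : Prop :=
  ∀ ι, Cout C r ι ⊆ f ι

/-- All registers of the circuit are simple. -/
def OnlySimple {m k n : ℕ} (C : Circuit m k n) : Prop :=
  (∀ i, C.inType i = RegType.simple) ∧ (∀ j, C.locType j = RegType.simple) ∧
    (∀ j, C.outType j = RegType.simple)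

/-- `Fun_S^r`: functions implementable by `r` rounds of circuits with only simple
registers. -/
def FunS (r m n : ℕ) : Set ((Fin m → BM) → Set (Fin n → BM)) :=
  { f | ∃ k, ∃ C : Circuit m k n, OnlySimple C ∧ Implements C r f }

/-- `Fun_M^r`: functions implementable by `r` rounds of circuits with arbitrary
register types. -/
def FunM (r m n : ℕ) : Set ((Fin m → BM) → Set (Fin n → BM)) :=
  { f | ∃ k, ∃ C : Circuit m k n, Implements C r f }

/-- A pivotal sequence over `BM^N`: consecutive elements differ in exactly one bit,
and that bit is `meta` in one of the two elements. -/
def PivotalSeq {N ℓ : ℕ} (x : Fin (ℓ + 1) → Fin N → BM) : Prop :=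
  ∀ i : Fin ℓ,
    ∃ j : Fin N,
      x i.castSucc j ≠ x i.succ j ∧
      (x i.castSucc j = BM.meta' ∨ x i.succ j = BM.meta') ∧
      ∀ j' : Fin N, x i.castSucc j' ≠ x i.succ j' → j' = j

/-- A function `f : BM^m → Pow(BM^n)` is natural iff it is bit-wise and closed
(a product of component functions each taking values in `{{0}, {1}, BM}`)
and specific (stabilizing the input restricts the output). -/
def IsNatural {m n : ℕ} (f : (Fin m → BM) → Set (Fin n → BM)) : Prop :=
  (∃ g : Fin n → (Fin m → BM) → Set BM,
      (∀ i x, g i x = {BM.zero} ∨ g i x = {BM.one} ∨ g i x = (Set.univ : Set BM)) ∧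
      (∀ x, f x = { y | ∀ i, y i ∈ g i x })) ∧
  (∀ x y, inRes x y → f y ⊆ f x)

/-- The `i`-th component of the metastable closure of `f : B^m → B^n`. -/
noncomputable def mclosureC {m n : ℕ} (f : (Fin m → Bool) → Fin n → Bool)
    (x : Fin m → BM) (i : Fin n) : Set BM :=
  if ∀ z ∈ boolRes x, f z i = false then {BM.zero}
  else if ∀ z ∈ boolRes x, f z i = true then {BM.one}
  else Set.univ

/-- The metastable closure `[f]_M : BM^m → Pow(BM^n)` of `f : B^m → B^n`. -/
noncomputable def mclosure {m n : ℕ} (f : (Fin m → Bool) → Fin n → Bool)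
    (x : Fin m → BM) : Set (Fin n → BM) :=
  { y | ∀ i, y i ∈ mclosureC f x i }

/-- The metastability detector specification: output `1` iff the input is `meta`. -/
def detectSpec : (Fin 1 → BM) → Set (Fin 1 → BM) := fun x =>
  if x 0 = BM.meta' then {fun _ => BM.one} else {fun _ => BM.zero}


/-!
A circuit cannot tell an input `x` from any stable resolution `y` of it. Run the circuit on
`y` and on `x` side by side, keeping local and output registers equal: in the `x`-run read
every input register so that the value read is `y`'s or `M` (a mask register in state `M`
offers such a read). Then every value read in the `x`-run is refined by the corresponding one
of the `y`-run; the Kleene extension, hence the logic, is monotone in this order, so whatever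
the `y`-run writes is also a legal write of the `x`-run. Hence `C_r(y) ⊆ C_r(x)`, and for a
detector `0 ∈ C_r(0) ⊆ C_r(M) ⊆ {1}`.
-/
lemma inResM_trans {k : ℕ} {x y z : Fin k → BM} (hxy : inResM x y) (hyz : inResM y z) :
    inResM x z := fun i => by
  rcases hxy i with h | h
  · exact h ▸ hyz i
  · exact Or.inr h

lemma boolRes_subset_of_inResM {k : ℕ} {x y : Fin k → BM} (h : inResM x y) :
    boolRes y ⊆ boolRes x := fun z hz i => by
  rcases h i with h' | h'
  · exact h' ▸ hz i
  · exact Or.inr h'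

lemma boolRes_nonempty {k : ℕ} (x : Fin k → BM) : (boolRes x).Nonempty :=
  ⟨fun i => decide (x i = BM.one), fun i => by cases h : x i <;> simp [h, BM.ofBool]⟩

lemma kleene_mono {k : ℕ} (f : (Fin k → Bool) → Bool) {x y : Fin k → BM} (h : inResM x y) :
    kleene f x = kleene f y ∨ kleene f x = BM.meta' := by
  have hsub := boolRes_subset_of_inResM h
  by_cases h0 : ∀ z ∈ boolRes x, f z = false
  · have h0' : ∀ z ∈ boolRes y, f z = false := fun z hz => h0 z (hsub hz)
    exact Or.inl (by rw [kleene, kleene, if_pos h0, if_pos h0'])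
  by_cases h1 : ∀ z ∈ boolRes x, f z = true
  · have h1' : ∀ z ∈ boolRes y, f z = true := fun z hz => h1 z (hsub hz)
    obtain ⟨z, hz⟩ := boolRes_nonempty y
    have h0' : ¬ ∀ z ∈ boolRes y, f z = false := fun h0' => by simpa [h1' z hz] using h0' z hz
    exact Or.inl (by rw [kleene, kleene, if_neg h0, if_neg h0', if_pos h1, if_pos h1'])
  · exact Or.inr (by rw [kleene, if_neg h0, if_neg h1])

lemma Comb.eval_mono {m : ℕ} {x y : Fin m → BM} (h : inResM x y) (c : Comb m) :
    c.eval x = c.eval y ∨ c.eval x = BM.meta' := by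
  induction c with
  | input i => exact h i
  | const _ => exact Or.inl rfl
  | gate _ f _ ih => exact kleene_mono f ih

lemma evalLogic_mono {m k n : ℕ} (C : Circuit m k n) {o o' : Fin (m + k) → BM}
    (h : inResM o o') : inResM (evalLogic C o) (evalLogic C o') :=
  fun j => Comb.eval_mono h (C.logic j)

lemma regRead_exists (t : RegType) (b : BM) : ∃ p, regRead t b p := by
  cases t <;> cases b <;> simp [regRead]

lemma regRead_of_ne_meta {t : RegType} {b : BM} {p : BM × BM} (hb : b ≠ BM.meta')
    (h : regRead t b p) : p = (b, b) := by
  cases b <;> simp_all [regRead]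

lemma exists_regRead_inResM (t : RegType) {a b : BM} (hb : b ≠ BM.meta')
    (hab : a = b ∨ a = BM.meta') :
    ∃ p, regRead t a p ∧ (p.1 = b ∨ p.1 = BM.meta') ∧ (p.2 = b ∨ p.2 = BM.meta') := by
  rcases hab with rfl | rfl
  · exact ⟨(a, a), by cases a <;> simp_all [regRead]⟩
  · cases t <;> cases b <;> simp_all [regRead]

lemma exists_succ {m k n : ℕ} (C : Circuit m k n) (s : CState m k n) : ∃ t, Succ C s t := by
  choose p hp using fun i => regRead_exists (C.inType i) (s.inp i)
  choose q hq using fun j => regRead_exists (C.locType j) (s.loc j)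
  let o : Fin (m + k) → BM := Fin.append (fun i => (p i).1) (fun j => (q j).1)
  have hread : ReadRel C s o (fun i => (p i).2) :=
    ⟨fun i => by simpa [o] using hp i, fun j => ⟨(q j).2, by simpa [o] using hq j⟩⟩
  refine ⟨⟨fun i => (p i).2, fun j => evalLogic C o (Fin.castAdd n j),
    fun j => evalLogic C o (Fin.natAdd k j)⟩, o, _, hread, rfl, ?_⟩
  rw [Fin.append_castAdd_natAdd]
  exact fun j => Or.inl rfl

lemma reach_nonempty {m k n : ℕ} (C : Circuit m k n) (r : ℕ) (s : CState m k n) :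
    (reach C r s).Nonempty := by
  induction r with
  | zero => exact ⟨s, rfl⟩
  | succ r ih =>
    obtain ⟨u, hu⟩ := ih
    obtain ⟨t, ht⟩ := exists_succ C u
    exact ⟨t, u, hu, ht⟩

def CState.Shadows {m k n : ℕ} (sM s : CState m k n) : Prop :=
  inRes sM.inp s.inp ∧ sM.loc = s.loc ∧ sM.out = s.out

lemma CState.Shadows.exists_succ {m k n : ℕ} {C : Circuit m k n} {sM s t : CState m k n}
    (hsh : sM.Shadows s) (ht : Succ C s t) : ∃ tM, Succ C sM tM ∧ tM.Shadows t := by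
  obtain ⟨⟨hinp, hstable⟩, hloc, hout⟩ := hsh
  obtain ⟨o, ι', ⟨hread_inp, hread_loc⟩, ht_inp, hwrite⟩ := ht
  choose ho hι' using fun i => Prod.mk.inj (regRead_of_ne_meta (hstable i) (hread_inp i))
  choose p hp hp₁ hp₂ using fun i =>
    exists_regRead_inResM (C.inType i) (hstable i) (hinp i)
  let oM : Fin (m + k) → BM := Fin.append (fun i => (p i).1) (fun j => o (Fin.natAdd m j))
  have hreadM : ReadRel C sM oM (fun i => (p i).2) :=
    ⟨fun i => by simpa [oM] using hp i, fun j => by simpa [oM, hloc] using hread_loc j⟩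
  have hoM : inResM oM o := fun l => by
    refine Fin.addCases (fun i => ?_) (fun j => ?_) l
    · simpa [oM, ho i] using hp₁ i
    · simp [oM]
  refine ⟨⟨fun i => (p i).2, t.loc, t.out⟩, ⟨oM, _, hreadM, rfl,
    inResM_trans (evalLogic_mono C hoM) hwrite⟩, ⟨fun i => ?_, fun i => ?_⟩, rfl, rfl⟩
  · rw [ht_inp, hι' i]; exact hp₂ i
  · rw [ht_inp, hι' i]; exact hstable i

lemma CState.Shadows.exists_reach {m k n : ℕ} {C : Circuit m k n} {sM s : CState m k n}
    (hsh : sM.Shadows s) (r : ℕ) : ∀ t ∈ reach C r s, ∃ tM ∈ reach C r sM, tM.Shadows t := by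
  induction r with
  | zero => rintro t rfl; exact ⟨sM, rfl, hsh⟩
  | succ r ih =>
    rintro t ⟨u, hu, hut⟩
    obtain ⟨uM, huM, hshu⟩ := ih u hu
    obtain ⟨tM, htM, hsht⟩ := hshu.exists_succ hut
    exact ⟨tM, ⟨uM, huM, htM⟩, hsht⟩

theorem Cout_subset_of_inRes {m k n : ℕ} (C : Circuit m k n) (r : ℕ) {x y : Fin m → BM}
    (hxy : inRes x y) : Cout C r y ⊆ Cout C r x := by
  rintro _ ⟨t, ht, rfl⟩
  obtain ⟨tM, htM, -, -, hout⟩ :=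
    (show (initState C x).Shadows (initState C y) from ⟨hxy, rfl, rfl⟩).exists_reach r t ht
  exact ⟨tM, htM, hout.symm⟩

/-- metastability cannot be detected: no circuit implements
`f(M) = {1}`, `f(x) = {0}` for `x ∈ {0,1}` (in any number `r ≥ 1` of rounds). -/
theorem no_metastability_detector :
    ¬ ∃ (k r : ℕ) (C : Circuit 1 k 1), 0 < r ∧ Implements C r detectSpec := by
  rintro ⟨k, r, C, -, himpl⟩
  obtain ⟨s, hs⟩ := reach_nonempty C r (initState C fun _ => BM.zero)
  have hres : inRes (fun _ => BM.meta') (fun _ : Fin 1 => BM.zero) :=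
    ⟨fun _ => Or.inr rfl, fun _ => BM.noConfusion⟩
  have h0 : s.out ∈ detectSpec fun _ => BM.zero := himpl _ ⟨s, hs, rfl⟩
  have hM : s.out ∈ detectSpec fun _ => BM.meta' :=
    himpl _ (Cout_subset_of_inRes C r hres ⟨s, hs, rfl⟩)
  simp only [detectSpec, if_pos, Set.mem_singleton_iff] at h0 hM
  exact BM.noConfusion (congrFun (h0.symm.trans hM) 0)
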